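/- Let X be a compact metric space, f : X → X continuous, C a chain component of f, and D(C) the partition of C into equivalence classes of the chain proximal relation ∼_C. For D ∈ D(C) define V^s(D) = ∩_{δ>0} { x ∈ W^s(C) : lim_{i→∞} d(f^i(x), f^i(D_δ)) = 0 }, where D_δ is the unique class of ∼_{C,δ} containing D. Then W^s(C) is the disjoint union of V^s(D) over D ∈ D(C), and each V^s(D) is a G_δ subset of W^s(C). -/

import Mathlib

open Filter Topology Metric Set

variable {X : Type*} [MetricSpace X]

/-- There is a `δ`-chain of `f` from `x` to `y`. -/
def ChainReach (f : X → X) (δ : ℝ) (x y : X) : Prop :=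
  ∃ k : ℕ, 0 < k ∧ ∃ c : ℕ → X, c 0 = x ∧ c k = y ∧
    ∀ i < k, dist (f (c i)) (c (i + 1)) ≤ δ

/-- `x → y` : for every `δ > 0` there is a `δ`-chain from `x` to `y`. -/
def ChainTo (f : X → X) (x y : X) : Prop := ∀ δ > 0, ChainReach f δ x y

/-- The chain recurrent set. -/
def CR (f : X → X) : Set X := {x | ChainTo f x x}

/-- The relation `x ↔ y`. -/
def ChainRel (f : X → X) (x y : X) : Prop := ChainTo f x y ∧ ChainTo f y x

/-- A chain component: an equivalence class of `↔` on `CR f`. -/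
def IsChainComponent (f : X → X) (C : Set X) : Prop :=
  ∃ x ∈ CR f, C = {y | y ∈ CR f ∧ ChainRel f x y}

/-- A `δ`-chain of `f` from `x` to `y` of length `k`, all of whose points lie in `S`. -/
def ChainInLen (f : X → X) (S : Set X) (δ : ℝ) (x y : X) (k : ℕ) : Prop :=
  0 < k ∧ ∃ c : ℕ → X, (∀ i ≤ k, c i ∈ S) ∧ c 0 = x ∧ c k = y ∧
    ∀ i < k, dist (f (c i)) (c (i + 1)) ≤ δ

/-- There is a `δ`-chain from `x` to `y` inside `S`. -/
def ChainInReach (f : X → X) (S : Set X) (δ : ℝ) (x y : X) : Prop :=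
  ∃ k, ChainInLen f S δ x y k

/-- `f` restricted to `S` is chain transitive. -/
def ChainTransitiveOn (f : X → X) (S : Set X) : Prop :=
  ∀ x ∈ S, ∀ y ∈ S, ∀ δ > 0, ChainInReach f S δ x y

/-- The set of lengths of `δ`-cycles of `f` restricted to `C`. -/
def cycLengths (f : X → X) (C : Set X) (δ : ℝ) : Set ℕ :=
  {k | ∃ x ∈ C, ChainInLen f C δ x x k}

/-- The relation `∼_{C,δ}` : there is a `δ`-chain in `C` from `x` to `y` whose
length is divisible by the gcd `m(C,δ)` of all `δ`-cycle lengths (divisibility by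
the gcd is expressed via common divisors). -/
def relCdelta (f : X → X) (C : Set X) (δ : ℝ) (x y : X) : Prop :=
  ∃ k : ℕ, (∀ d : ℕ, (∀ l ∈ cycLengths f C δ, d ∣ l) → d ∣ k) ∧
    ChainInLen f C δ x y k

/-- The chain proximal relation `∼_C`. -/
def relC (f : X → X) (C : Set X) (x y : X) : Prop := ∀ δ > 0, relCdelta f C δ x y

/-- The class of `∼_{C,δ}` containing `x`. -/
def classCdelta (f : X → X) (C : Set X) (δ : ℝ) (x : X) : Set X :=
  {y | y ∈ C ∧ relCdelta f C δ x y}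

/-- The class of `∼_C` containing `x`. -/
def classC (f : X → X) (C : Set X) (x : X) : Set X :=
  {y | y ∈ C ∧ relC f C x y}

/-- The basin of attraction of a set. -/
def basin (f : X → X) (C : Set X) : Set X :=
  {x | Tendsto (fun i => infDist (f^[i] x) C) atTop (𝓝 0)}

/-- `V^s(D)` for the class `D` of `∼_C` containing the point `x ∈ C`. -/
def Vs (f : X → X) (C : Set X) (x : X) : Set X :=
  {z | z ∈ basin f C ∧ ∀ δ > 0,
    Tendsto (fun i => infDist (f^[i] z) (f^[i] '' classCdelta f C δ x)) atTop (𝓝 0)}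

/-!
Two points of `C` at distance at most `δ` are `∼_{C,δ}`-equivalent (write one as `f w` with
`w ∈ C`; the one-step chains from `w` to both have equal length), and `f` maps classes onto
classes. For `z ∈ W^s(C)` the nearest points `p i ∈ C` to `f^[i] z` form an asymptotic
pseudo-orbit, and a `δ`-pseudo-orbit that once lies in the class of `f^[i] x` stays in the classes
of the orbit of `x`. So `z ∈ V^s(D)` exactly when, for every `δ`, `p i ∼_{C,δ} f^[i] x` for large
`i`. Disjointness follows, existence comes from nested compact sets, and since coming `δ/2`-close
to the class just once (late enough) forces tracking, `V^s(D)` is a countable intersection of open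
sets.
-/
section Chains

variable {f : X → X} {S : Set X} {δ δ' : ℝ} {x y z w : X} {k l : ℕ}

lemma chainReach_iff : ChainReach f δ x y ↔ ∃ k, ChainInLen f univ δ x y k := by
  simp [ChainReach, ChainInLen]

lemma ChainInLen.mem_left (h : ChainInLen f S δ x y k) : x ∈ S := by
  obtain ⟨-, c, hcS, rfl, -, -⟩ := h
  exact hcS 0 k.zero_le

lemma ChainInLen.mem_right (h : ChainInLen f S δ x y k) : y ∈ S := by
  obtain ⟨-, c, hcS, -, rfl, -⟩ := h
  exact hcS k le_rfl

lemma ChainInLen.mono (hδ : δ ≤ δ') (h : ChainInLen f S δ x y k) : ChainInLen f S δ' x y k := by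
  obtain ⟨hk, c, hcS, hc0, hck, hc⟩ := h
  exact ⟨hk, c, hcS, hc0, hck, fun i hi => (hc i hi).trans hδ⟩

lemma ChainInLen.single (hx : x ∈ S) (hy : y ∈ S) (h : dist (f x) y ≤ δ) :
    ChainInLen f S δ x y 1 := by
  refine ⟨one_pos, fun i => if i = 0 then x else y, fun i _ => ?_, rfl, rfl, fun i hi => ?_⟩
  · dsimp only
    split_ifs <;> assumption
  · obtain rfl : i = 0 := by omega
    simpa using h

lemma ChainInLen.single_apply (hx : x ∈ S) (hfx : f x ∈ S) (hδ : 0 ≤ δ) :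
    ChainInLen f S δ x (f x) 1 :=
  .single hx hfx (by rwa [dist_self])

lemma ChainInLen.append (h₁ : ChainInLen f S δ x y k) (h₂ : ChainInLen f S δ y z l) :
    ChainInLen f S δ x z (k + l) := by
  obtain ⟨hk, c, hcS, hc0, hck, hc⟩ := h₁
  obtain ⟨hl, d, hdS, hd0, hdl, hd⟩ := h₂
  set e : ℕ → X := fun i => if i ≤ k then c i else d (i - k)
  have he_left : ∀ i ≤ k, e i = c i := fun i hi => if_pos hi
  have he_right : ∀ i ≥ k, e i = d (i - k) := by
    intro i hi
    rcases hi.eq_or_lt with rfl | hi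
    · simp [e, hck, hd0]
    · exact if_neg (by omega)
  refine ⟨by omega, e, fun i hi => ?_, by simp [e, hc0], ?_, fun i hi => ?_⟩
  · rcases le_total i k with h | h
    · rw [he_left i h]; exact hcS i h
    · rw [he_right i h]; exact hdS _ (by omega)
  · rw [he_right _ (by omega), Nat.add_sub_cancel_left, hdl]
  · rcases lt_or_ge i k with h | h
    · rw [he_left i h.le, he_left (i + 1) h]; exact hc i h
    · rw [he_right i h, he_right (i + 1) (by omega), Nat.sub_add_comm h]
      exact hd _ (by omega)

lemma ChainInLen.exists_dist_apply_le_of_succ (h : ChainInLen f S δ x z (k + 1)) (hk : 0 < k) :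
    ∃ w, dist (f x) w ≤ δ ∧ ChainInLen f S δ w z k := by
  obtain ⟨-, c, hcS, rfl, hck, hc⟩ := h
  exact ⟨c 1, hc 0 (by omega), hk, fun i => c (i + 1), fun i hi => hcS _ (by omega), rfl, hck,
    fun i hi => hc _ (by omega)⟩

lemma chainReach_of_chain {c : ℕ → X} (hc : ∀ i < k, dist (f (c i)) (c (i + 1)) ≤ δ) {i j : ℕ}
    (hij : i < j) (hjk : j ≤ k) : ChainReach f δ (c i) (c j) :=
  ⟨j - i, by omega, fun t => c (i + t), rfl, by simp only [Nat.add_sub_cancel' hij.le],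
    fun t ht => by simpa [add_assoc] using hc (i + t) (by omega)⟩

lemma ChainReach.mono (hδ : δ ≤ δ') (h : ChainReach f δ x y) : ChainReach f δ' x y := by
  obtain ⟨k, hk, c, hc0, hck, hc⟩ := h
  exact ⟨k, hk, c, hc0, hck, fun i hi => (hc i hi).trans hδ⟩

lemma ChainReach.trans (h₁ : ChainReach f δ x y) (h₂ : ChainReach f δ y z) :
    ChainReach f δ x z := by
  obtain ⟨k, hk⟩ := chainReach_iff.1 h₁
  obtain ⟨l, hl⟩ := chainReach_iff.1 h₂
  exact chainReach_iff.2 ⟨k + l, hk.append hl⟩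

lemma chainReach_to_and_from_of_chain {c : ℕ → X}
    (hc : ∀ i < k, dist (f (c i)) (c (i + 1)) ≤ δ) (hc0 : c 0 = x) (hck : c k = y)
    (hxx : ChainReach f δ x x) (hyx : ChainReach f δ y x) {j : ℕ} (hj : j ≤ k) :
    ChainReach f δ x (c j) ∧ ChainReach f δ (c j) x := by
  constructor
  · rcases j.eq_zero_or_pos with rfl | hj0
    · rwa [hc0]
    · rw [← hc0]
      exact chainReach_of_chain hc hj0 hj
  · rcases hj.eq_or_lt with rfl | hjk
    · rwa [hck]
    · rw [← hck] at hyx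
      exact (chainReach_of_chain hc hjk le_rfl).trans hyx

lemma ChainReach.replace_start (h : ChainReach f δ w y) (hxw : dist (f x) (f w) ≤ δ') :
    ChainReach f (δ + δ') x y := by
  obtain ⟨k, hk, c, hc0, hck, hc⟩ := h
  refine ⟨k, hk, Function.update c 0 x, Function.update_self .., ?_, fun i hi => ?_⟩
  · rw [Function.update_of_ne hk.ne', hck]
  rw [Function.update_of_ne i.succ_ne_zero]
  rcases eq_or_ne i 0 with rfl | hi0
  · rw [Function.update_self]
    calc dist (f x) (c 1) ≤ dist (f x) (f w) + dist (f w) (c 1) := dist_triangle _ _ _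
      _ ≤ δ' + δ := add_le_add hxw (hc0 ▸ hc 0 hi)
      _ = δ + δ' := add_comm _ _
  · rw [Function.update_of_ne hi0]
    linarith [hc i hi, dist_nonneg.trans hxw]

lemma ChainReach.replace_end (h : ChainReach f δ x y) (hyz : dist y z ≤ δ') :
    ChainReach f (δ + δ') x z := by
  obtain ⟨k, hk, c, hc0, hck, hc⟩ := h
  refine ⟨k, hk, Function.update c k z, ?_, Function.update_self .., fun i hi => ?_⟩
  · rw [Function.update_of_ne hk.ne, hc0]
  rw [Function.update_of_ne hi.ne]
  rcases eq_or_ne (i + 1) k with rfl | hik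
  · rw [Function.update_self]
    calc dist (f (c i)) z ≤ dist (f (c i)) (c (i + 1)) + dist (c (i + 1)) z := dist_triangle _ _ _
      _ ≤ δ + δ' := add_le_add (hc i hi) (hck ▸ hyz)
  · rw [Function.update_of_ne hik]
    linarith [hc i hi, dist_nonneg.trans hyz]

lemma chainTo_apply : ChainTo f x (f x) := fun _ hδ =>
  chainReach_iff.2 ⟨1, .single_apply (mem_univ _) (mem_univ _) hδ.le⟩

lemma ChainTo.trans (h₁ : ChainTo f x y) (h₂ : ChainTo f y z) : ChainTo f x z :=
  fun δ hδ => (h₁ δ hδ).trans (h₂ δ hδ)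

lemma ChainTo.of_forall_exists_dist_le_right
    (h : ∀ ε > 0, ∃ w, ChainReach f ε x w ∧ dist w y ≤ ε) : ChainTo f x y := by
  intro δ hδ
  obtain ⟨w, hxw, hwy⟩ := h (δ / 2) (half_pos hδ)
  simpa using hxw.replace_end hwy

lemma ChainTo.of_forall_exists_dist_le_left (hf : Continuous f)
    (h : ∀ ε > 0, ∃ w, dist x w ≤ ε ∧ ChainReach f ε w y) : ChainTo f x y := by
  intro δ hδ
  obtain ⟨r, hr, hfr⟩ := Metric.continuous_iff.1 hf x (δ / 2) (half_pos hδ)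
  obtain ⟨w, hxw, hwy⟩ := h (min (r / 2) (δ / 2)) (by positivity)
  have hfw : dist (f x) (f w) ≤ δ / 2 := by
    rw [dist_comm]
    refine (hfr w ?_).le
    rw [dist_comm]
    linarith [min_le_left (r / 2) (δ / 2)]
  simpa using (hwy.mono (min_le_right _ _)).replace_start hfw

lemma chainTo_apply_self_of_mem_CR (hf : Continuous f) (hx : x ∈ CR f) : ChainTo f (f x) x := by
  refine ChainTo.of_forall_exists_dist_le_left hf fun ε hε => ?_
  obtain ⟨k, hk⟩ := chainReach_iff.1 (hx ε hε)
  have hk0 : 0 < k := hk.1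
  -- going around the cycle twice leaves a nonempty chain after the first step
  have hk2 : ChainInLen f univ ε x x (k + k - 1 + 1) := by
    rw [Nat.sub_add_cancel (by omega)]
    exact hk.append hk
  obtain ⟨w, hxw, hwx⟩ := hk2.exists_dist_apply_le_of_succ (by omega)
  exact ⟨w, hxw, chainReach_iff.2 ⟨_, hwx⟩⟩

end Chains

lemma IsCompact.exists_retraction_dist_eq_infDist {C : Set X} (hC : IsCompact C)
    (hne : C.Nonempty) :
    ∃ q : X → X, (∀ w, q w ∈ C) ∧ (∀ w, dist w (q w) = infDist w C) ∧ ∀ w ∈ C, q w = w := by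
  have : ∀ w, ∃ q ∈ C, dist w q = infDist w C ∧ (w ∈ C → q = w) := fun w => by
    by_cases hw : w ∈ C
    · exact ⟨w, hw, by rw [dist_self, infDist_zero_of_mem hw], fun _ => rfl⟩
    · obtain ⟨q, hq, hwq⟩ := hC.exists_infDist_eq_dist hne w
      exact ⟨q, hq, hwq.symm, fun h => absurd h hw⟩
  choose q hqC hqd hqw using this
  exact ⟨q, hqC, hqd, hqw⟩

namespace IsChainComponent

variable {f : X → X} {C : Set X} {x y : X}

lemma subset_CR (hC : IsChainComponent f C) : C ⊆ CR f := by
  obtain ⟨x₀, -, rfl⟩ := hC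
  exact fun _ hy => hy.1

lemma nonempty (hC : IsChainComponent f C) : C.Nonempty := by
  obtain ⟨x₀, hx₀, rfl⟩ := hC
  exact ⟨x₀, hx₀, hx₀, hx₀⟩

lemma chainTo (hC : IsChainComponent f C) (hx : x ∈ C) (hy : y ∈ C) : ChainTo f x y := by
  obtain ⟨x₀, -, rfl⟩ := hC
  exact hx.2.2.trans hy.2.1

lemma mem_of_chainTo (hC : IsChainComponent f C) (hx : x ∈ C) (hxy : ChainTo f x y)
    (hyx : ChainTo f y x) : y ∈ C := by
  obtain ⟨x₀, -, rfl⟩ := hC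
  exact ⟨hyx.trans hxy, hx.2.1.trans hxy, hyx.trans hx.2.2⟩

lemma mapsTo (hf : Continuous f) (hC : IsChainComponent f C) : MapsTo f C C := fun _ hx =>
  hC.mem_of_chainTo hx chainTo_apply (chainTo_apply_self_of_mem_CR hf (hC.subset_CR hx))

lemma isClosed (hf : Continuous f) (hC : IsChainComponent f C) : IsClosed C := by
  obtain ⟨x₀, hx₀⟩ := hC.nonempty
  refine isClosed_of_closure_subset fun y hy => hC.mem_of_chainTo hx₀ ?_ ?_
  · refine ChainTo.of_forall_exists_dist_le_right fun ε hε => ?_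
    obtain ⟨w, hw, hyw⟩ := Metric.mem_closure_iff.1 hy ε hε
    exact ⟨w, hC.chainTo hx₀ hw ε hε, by rw [dist_comm]; exact hyw.le⟩
  · refine ChainTo.of_forall_exists_dist_le_left hf fun ε hε => ?_
    obtain ⟨w, hw, hyw⟩ := Metric.mem_closure_iff.1 hy ε hε
    exact ⟨w, hyw.le, hC.chainTo hw hx₀ ε hε⟩

/-- A limit, as `ε → 0`, of points that `ε`-chain to and from `x` lies in `C`. -/
lemma exists_pos_infDist_lt [CompactSpace X] (hf : Continuous f) (hC : IsChainComponent f C)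
    (hx : x ∈ C) {ρ : ℝ} (hρ : 0 < ρ) :
    ∃ ε > 0, ∀ w, ChainReach f ε x w → ChainReach f ε w x → infDist w C < ρ := by
  by_contra! h
  choose w hxw hwx hwρ using fun n : ℕ => h (1 / (n + 1)) Nat.one_div_pos_of_nat
  obtain ⟨z, -, φ, hφ, hz⟩ := isCompact_univ.tendsto_subseq (x := w) fun _ => mem_univ _
  have hclose : ∀ ε > 0, ∃ n, 1 / ((φ n : ℝ) + 1) ≤ ε ∧ dist (w (φ n)) z ≤ ε := fun ε hε =>
    ((hz.eventually (closedBall_mem_nhds z hε)).and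
      ((tendsto_one_div_add_atTop_nhds_zero_nat.comp hφ.tendsto_atTop).eventually
        (ge_mem_nhds hε))).exists.imp fun n hn => ⟨hn.2, hn.1⟩
  have hzC : z ∈ C := by
    refine hC.mem_of_chainTo hx (.of_forall_exists_dist_le_right fun ε hε => ?_)
      (.of_forall_exists_dist_le_left hf fun ε hε => ?_)
    · obtain ⟨n, hnε, hn⟩ := hclose ε hε
      exact ⟨w (φ n), (hxw (φ n)).mono hnε, hn⟩
    · obtain ⟨n, hnε, hn⟩ := hclose ε hε
      exact ⟨w (φ n), by rw [dist_comm]; exact hn, (hwx (φ n)).mono hnε⟩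
  have : ρ ≤ infDist z C :=
    ge_of_tendsto (((continuous_infDist_pt C).tendsto z).comp hz)
      (Eventually.of_forall fun n => hwρ (φ n))
  rw [infDist_zero_of_mem hzC] at this
  linarith

/-- An `ε`-chain from `x` to `y` runs near `C`, so projecting its points to `C` gives a
`δ`-chain inside `C`. -/
theorem chainTransitiveOn [CompactSpace X] (hf : Continuous f) (hC : IsChainComponent f C) :
    ChainTransitiveOn f C := by
  intro x hx y hy δ hδ
  obtain ⟨r, hr, hfr⟩ := Metric.uniformContinuous_iff.1
    (CompactSpace.uniformContinuous_of_continuous hf) (δ / 2) (half_pos hδ)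
  obtain ⟨ε₀, hε₀, hnear⟩ := hC.exists_pos_infDist_lt hf hx (ρ := min r (δ / 4)) (by positivity)
  set ε := min ε₀ (δ / 4)
  have hε : 0 < ε := by positivity
  obtain ⟨k, hk, c, hc0, hck, hc⟩ := hC.chainTo hx hy ε hε
  obtain ⟨q, hqC, hqd, hqw⟩ :=
    (hC.isClosed hf).isCompact.exists_retraction_dist_eq_infDist hC.nonempty
  have hcq : ∀ j ≤ k, dist (c j) (q (c j)) < min r (δ / 4) := fun j hj => by
    obtain ⟨hxc, hcx⟩ := chainReach_to_and_from_of_chain hc hc0 hck (hC.subset_CR hx ε hε)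
      (hC.chainTo hy hx ε hε) hj
    rw [hqd]
    exact hnear _ (hxc.mono (min_le_left _ _)) (hcx.mono (min_le_left _ _))
  refine ⟨k, hk, fun j => q (c j), fun j _ => hqC _, by simp [hc0, hqw x hx],
    by simp [hck, hqw y hy], fun j hj => ?_⟩
  have h₁ : dist (f (q (c j))) (f (c j)) ≤ δ / 2 := by
    refine (hfr ?_).le
    rw [dist_comm]
    exact (hcq j hj.le).trans_le (min_le_left _ _)
  have h₂ : dist (f (c j)) (c (j + 1)) ≤ δ / 4 := (hc j hj).trans (min_le_right _ _)
  have h₃ : dist (c (j + 1)) (q (c (j + 1))) ≤ δ / 4 :=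
    ((hcq (j + 1) hj).trans_le (min_le_right _ _)).le
  calc dist (f (q (c j))) (q (c (j + 1)))
      ≤ dist (f (q (c j))) (f (c j)) + dist (f (c j)) (c (j + 1))
        + dist (c (j + 1)) (q (c (j + 1))) := dist_triangle4 _ _ _ _
    _ ≤ δ / 2 + δ / 4 + δ / 4 := by gcongr
    _ = δ := by ring

end IsChainComponent

lemma ChainTransitiveOn.surjOn {f : X → X} {C : Set X} (hT : ChainTransitiveOn f C)
    (hf : Continuous f) (hCc : IsCompact C) : SurjOn f C C := by
  intro y hy
  refine (hCc.image hf).isClosed.closure_subset (Metric.mem_closure_iff.2 fun ε hε => ?_)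
  obtain ⟨k, hk, c, hcC, -, hck, hc⟩ := hT y hy y hy (ε / 2) (half_pos hε)
  refine ⟨f (c (k - 1)), mem_image_of_mem f (hcC _ (by omega)), ?_⟩
  have := hc (k - 1) (by omega)
  rw [Nat.sub_add_cancel hk, hck, dist_comm] at this
  linarith

/-- `m(C,δ) ∣ k`, where `m(C,δ)` is the gcd of the lengths of `δ`-cycles in `C`. -/
def CycGcdDvd (f : X → X) (C : Set X) (δ : ℝ) (k : ℕ) : Prop :=
  ∀ d : ℕ, (∀ l ∈ cycLengths f C δ, d ∣ l) → d ∣ k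

section CyclicDecomposition

variable {f : X → X} {C : Set X} {δ δ' : ℝ} {x y z u v w a b : X} {k l j : ℕ}

lemma CycGcdDvd.add (hk : CycGcdDvd f C δ k) (hl : CycGcdDvd f C δ l) : CycGcdDvd f C δ (k + l) :=
  fun d hd => dvd_add (hk d hd) (hl d hd)

lemma CycGcdDvd.of_add_left (h : CycGcdDvd f C δ (k + l)) (hk : CycGcdDvd f C δ k) :
    CycGcdDvd f C δ l :=
  fun d hd => (Nat.dvd_add_right (hk d hd)).1 (h d hd)

lemma cycGcdDvd_of_chainInLen (h : ChainInLen f C δ x x k) (hx : x ∈ C) : CycGcdDvd f C δ k :=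
  fun _ hd => hd k ⟨x, hx, h⟩

lemma CycGcdDvd.mono (hδ : δ ≤ δ') (h : CycGcdDvd f C δ k) : CycGcdDvd f C δ' k :=
  fun d hd => h d fun l ⟨x, hx, hl⟩ => hd l ⟨x, hx, hl.mono hδ⟩

lemma relCdelta.refl (hT : ChainTransitiveOn f C) (hδ : 0 < δ) (hx : x ∈ C) :
    relCdelta f C δ x x := by
  obtain ⟨k, hk⟩ := hT x hx x hx δ hδ
  exact ⟨k, cycGcdDvd_of_chainInLen hk hx, hk⟩

lemma relCdelta.symm (hT : ChainTransitiveOn f C) (hδ : 0 < δ) (h : relCdelta f C δ x y) :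
    relCdelta f C δ y x := by
  obtain ⟨k, hk, hxy⟩ := h
  obtain ⟨l, hyx⟩ := hT y hxy.mem_right x hxy.mem_left δ hδ
  exact ⟨l, (cycGcdDvd_of_chainInLen (hxy.append hyx) hxy.mem_left).of_add_left hk, hyx⟩

lemma relCdelta.trans (h₁ : relCdelta f C δ x y) (h₂ : relCdelta f C δ y z) :
    relCdelta f C δ x z := by
  obtain ⟨k, hk : CycGcdDvd f C δ k, hxy⟩ := h₁
  obtain ⟨l, hl : CycGcdDvd f C δ l, hyz⟩ := h₂
  exact ⟨k + l, hk.add hl, hxy.append hyz⟩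

lemma relCdelta.mono (hδ : δ ≤ δ') (h : relCdelta f C δ x y) : relCdelta f C δ' x y := by
  obtain ⟨k, hk : CycGcdDvd f C δ k, hxy⟩ := h
  exact ⟨k, hk.mono hδ, hxy.mono hδ⟩

lemma relCdelta_of_chainInLen_of_chainInLen (hT : ChainTransitiveOn f C) (hδ : 0 < δ)
    (hu : ChainInLen f C δ w u k) (hv : ChainInLen f C δ w v (k + j)) (hj : CycGcdDvd f C δ j) :
    relCdelta f C δ u v := by
  obtain ⟨l, hl⟩ := hT u hu.mem_right w hu.mem_left δ hδ
  refine ⟨l + (k + j), ?_, hl.append hv⟩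
  rw [← add_assoc, add_comm l]
  exact (cycGcdDvd_of_chainInLen (hu.append hl) hu.mem_left).add hj

lemma relCdelta_of_chainInLen_of_chainInLen' (hT : ChainTransitiveOn f C) (hδ : 0 < δ)
    (hu : ChainInLen f C δ u w (k + j)) (hv : ChainInLen f C δ v w k) (hj : CycGcdDvd f C δ j) :
    relCdelta f C δ u v := by
  obtain ⟨l, hl⟩ := hT w hv.mem_right v hv.mem_left δ hδ
  refine ⟨k + j + l, ?_, hu.append hl⟩
  rw [add_right_comm]
  exact (cycGcdDvd_of_chainInLen (hv.append hl) hv.mem_left).add hj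

lemma relCdelta_apply_of_dist_le (hT : ChainTransitiveOn f C) (hδ : 0 < δ)
    (hmaps : MapsTo f C C) (ha : a ∈ C) (hb : b ∈ C) (hab : dist (f a) b ≤ δ) :
    relCdelta f C δ (f a) b :=
  relCdelta_of_chainInLen_of_chainInLen (j := 0) hT hδ
    (.single_apply ha (hmaps ha) hδ.le) (.single ha hb hab) fun d _ => dvd_zero d

lemma relCdelta_of_dist_le (hT : ChainTransitiveOn f C) (hδ : 0 < δ) (hmaps : MapsTo f C C)
    (hsurj : SurjOn f C C) (ha : a ∈ C) (hb : b ∈ C) (hab : dist a b ≤ δ) :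
    relCdelta f C δ a b := by
  obtain ⟨w, hw, rfl⟩ := hsurj ha
  exact relCdelta_apply_of_dist_le hT hδ hmaps hw hb hab

lemma relCdelta.apply (hT : ChainTransitiveOn f C) (hδ : 0 < δ) (hmaps : MapsTo f C C)
    (h : relCdelta f C δ x y) : relCdelta f C δ (f x) (f y) := by
  obtain ⟨j, hj, hxy⟩ := h
  refine relCdelta_of_chainInLen_of_chainInLen hT hδ
    (.single_apply hxy.mem_left (hmaps hxy.mem_left) hδ.le) ?_ hj
  rw [add_comm]
  exact hxy.append (.single_apply hxy.mem_right (hmaps hxy.mem_right) hδ.le)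

lemma relCdelta.of_apply (hT : ChainTransitiveOn f C) (hδ : 0 < δ) (hmaps : MapsTo f C C)
    (hx : x ∈ C) (hy : y ∈ C) (h : relCdelta f C δ (f x) (f y)) : relCdelta f C δ x y := by
  obtain ⟨j, hj, hxy⟩ := h
  exact relCdelta_of_chainInLen_of_chainInLen' hT hδ
    ((ChainInLen.single_apply hx (hmaps hx) hδ.le).append hxy)
    (.single_apply hy (hmaps hy) hδ.le) hj

lemma relCdelta.of_iterate (hT : ChainTransitiveOn f C) (hδ : 0 < δ) (hmaps : MapsTo f C C)
    (hx : x ∈ C) (hy : y ∈ C) (n : ℕ) (h : relCdelta f C δ (f^[n] x) (f^[n] y)) :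
    relCdelta f C δ x y := by
  induction n with
  | zero => exact h
  | succ n ih =>
    simp only [Function.iterate_succ_apply'] at h
    exact ih (h.of_apply hT hδ hmaps (hmaps.iterate n hx) (hmaps.iterate n hy))

lemma mem_classCdelta_self (hT : ChainTransitiveOn f C) (hδ : 0 < δ) (hx : x ∈ C) :
    x ∈ classCdelta f C δ x :=
  ⟨hx, .refl hT hδ hx⟩

lemma image_classCdelta (hT : ChainTransitiveOn f C) (hδ : 0 < δ) (hmaps : MapsTo f C C)
    (hsurj : SurjOn f C C) (hx : x ∈ C) : f '' classCdelta f C δ x = classCdelta f C δ (f x) := by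
  ext b
  constructor
  · rintro ⟨a, ⟨ha, hxa⟩, rfl⟩
    exact ⟨hmaps ha, hxa.apply hT hδ hmaps⟩
  · rintro ⟨hb, hxb⟩
    obtain ⟨a, ha, rfl⟩ := hsurj hb
    exact ⟨a, ⟨ha, hxb.of_apply hT hδ hmaps hx ha⟩, rfl⟩

lemma image_iterate_classCdelta (hT : ChainTransitiveOn f C) (hδ : 0 < δ) (hmaps : MapsTo f C C)
    (hsurj : SurjOn f C C) (hx : x ∈ C) (n : ℕ) :
    f^[n] '' classCdelta f C δ x = classCdelta f C δ (f^[n] x) := by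
  induction n with
  | zero => simp
  | succ n ih =>
    rw [Function.iterate_succ', image_comp, ih, Function.comp_apply,
      image_classCdelta hT hδ hmaps hsurj (hmaps.iterate n hx)]

lemma isClosed_classCdelta (hT : ChainTransitiveOn f C) (hδ : 0 < δ) (hmaps : MapsTo f C C)
    (hsurj : SurjOn f C C) (hCc : IsClosed C) : IsClosed (classCdelta f C δ x) := by
  refine isClosed_of_closure_subset fun y hy => ?_
  have hyC : y ∈ C := hCc.closure_subset_iff.2 (fun _ h => h.1) hy
  obtain ⟨b, ⟨hb, hxb⟩, hyb⟩ := Metric.mem_closure_iff.1 hy δ hδ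
  rw [dist_comm] at hyb
  exact ⟨hyC, hxb.trans (relCdelta_of_dist_le hT hδ hmaps hsurj hb hyC hyb.le)⟩

end CyclicDecomposition

section Basin

variable {f : X → X} {C : Set X} {δ : ℝ} {x z : X} {p : ℕ → X}

lemma relCdelta_iterate_of_dist_le (hT : ChainTransitiveOn f C) (hδ : 0 < δ)
    (hmaps : MapsTo f C C) (hpC : ∀ i, p i ∈ C) {N : ℕ}
    (hp : ∀ i ≥ N, dist (f (p i)) (p (i + 1)) ≤ δ) (h : relCdelta f C δ x (p N)) :
    ∀ k, relCdelta f C δ (f^[k] x) (p (N + k))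
  | 0 => h
  | k + 1 => by
    rw [Function.iterate_succ_apply', ← add_assoc]
    exact ((relCdelta_iterate_of_dist_le hT hδ hmaps hpC hp h k).apply hT hδ hmaps).trans
      (relCdelta_apply_of_dist_le hT hδ hmaps (hpC _) (hpC _) (hp _ (by omega)))

lemma eventually_relCdelta_of_frequently (hT : ChainTransitiveOn f C) (hδ : 0 < δ)
    (hmaps : MapsTo f C C) (hpC : ∀ i, p i ∈ C)
    (hp : ∀ᶠ i in atTop, dist (f (p i)) (p (i + 1)) ≤ δ)
    (h : ∃ᶠ i in atTop, relCdelta f C δ (f^[i] x) (p i)) :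
    ∀ᶠ i in atTop, relCdelta f C δ (f^[i] x) (p i) := by
  obtain ⟨N, hN⟩ := eventually_atTop.1 hp
  obtain ⟨M, hNM, hM⟩ := frequently_atTop.1 h N
  refine eventually_atTop.2 ⟨M, fun i hi => ?_⟩
  have := relCdelta_iterate_of_dist_le hT hδ hmaps hpC (fun i hi => hN i (hNM.trans hi)) hM
    (i - M)
  rwa [← Function.iterate_add_apply, Nat.sub_add_cancel hi, Nat.add_sub_cancel' hi] at this

lemma exists_tendsto_dist_iterate_of_mem_basin (hCc : IsCompact C) (hCne : C.Nonempty)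
    (hz : z ∈ basin f C) :
    ∃ p : ℕ → X, (∀ i, p i ∈ C) ∧ Tendsto (fun i => dist (f^[i] z) (p i)) atTop (𝓝 0) := by
  choose p hpC hp using fun i => hCc.exists_infDist_eq_dist hCne (f^[i] z)
  exact ⟨p, hpC, by simpa [basin, hp] using hz⟩

lemma tendsto_dist_apply_succ (hf : UniformContinuous f)
    (hzp : Tendsto (fun i => dist (f^[i] z) (p i)) atTop (𝓝 0)) :
    Tendsto (fun i => dist (f (p i)) (p (i + 1))) atTop (𝓝 0) := by
  have h₁ : Tendsto (fun i => dist (f (p i)) (f (f^[i] z))) atTop (𝓝 0) :=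
    tendsto_uniformity_iff_dist_tendsto_zero.1 (Tendsto.comp hf
      ((tendsto_uniformity_iff_dist_tendsto_zero (f := fun i => (p i, f^[i] z))).2
        (by simpa only [dist_comm] using hzp)))
  have h₂ := hzp.comp (tendsto_add_atTop_nat 1)
  refine squeeze_zero (fun _ => dist_nonneg) (fun i => ?_) (by simpa using h₁.add h₂)
  calc dist (f (p i)) (p (i + 1))
      ≤ dist (f (p i)) (f (f^[i] z)) + dist (f (f^[i] z)) (p (i + 1)) := dist_triangle _ _ _
    _ = dist (f (p i)) (f (f^[i] z)) + dist (f^[i + 1] z) (p (i + 1)) := by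
      rw [Function.iterate_succ_apply']

lemma tendsto_infDist_of_eventually_relCdelta (hT : ChainTransitiveOn f C) (hδ : 0 < δ)
    (hmaps : MapsTo f C C) (hsurj : SurjOn f C C) (hx : x ∈ C) (hpC : ∀ i, p i ∈ C)
    (hzp : Tendsto (fun i => dist (f^[i] z) (p i)) atTop (𝓝 0))
    (h : ∀ᶠ i in atTop, relCdelta f C δ (f^[i] x) (p i)) :
    Tendsto (fun i => infDist (f^[i] z) (f^[i] '' classCdelta f C δ x)) atTop (𝓝 0) := by
  refine squeeze_zero' (Eventually.of_forall fun _ => infDist_nonneg) (h.mono fun i hi => ?_) hzp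
  rw [image_iterate_classCdelta hT hδ hmaps hsurj hx]
  exact infDist_le_dist_of_mem ⟨hpC i, hi⟩

/-- Once `f^[i] z` is `δ/2`-close both to the class of `f^[i] x` and to `p i`, the point `p i`
lies in that class, and the pseudo-orbit `p` never leaves the classes along the orbit of `x`. -/
lemma eventually_relCdelta_of_frequently_infDist_lt (hT : ChainTransitiveOn f C) (hδ : 0 < δ)
    (hmaps : MapsTo f C C) (hsurj : SurjOn f C C) (hf : UniformContinuous f) (hx : x ∈ C)
    (hpC : ∀ i, p i ∈ C) (hzp : Tendsto (fun i => dist (f^[i] z) (p i)) atTop (𝓝 0))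
    (h : ∃ᶠ i in atTop, infDist (f^[i] z) (f^[i] '' classCdelta f C δ x) < δ / 2) :
    ∀ᶠ i in atTop, relCdelta f C δ (f^[i] x) (p i) := by
  refine eventually_relCdelta_of_frequently hT hδ hmaps hpC
    ((tendsto_dist_apply_succ hf hzp).eventually (ge_mem_nhds hδ)) ?_
  refine (h.and_eventually (hzp.eventually (gt_mem_nhds (half_pos hδ)))).mono ?_
  rintro i ⟨hi, hzpi⟩
  have hxi := hmaps.iterate i hx
  rw [image_iterate_classCdelta hT hδ hmaps hsurj hx] at hi
  obtain ⟨b, ⟨hb, hxb⟩, hzb⟩ := (infDist_lt_iff ⟨_, mem_classCdelta_self hT hδ hxi⟩).1 hi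
  refine hxb.trans (relCdelta_of_dist_le hT hδ hmaps hsurj hb (hpC i) ?_)
  linarith [dist_triangle_left b (p i) (f^[i] z)]

lemma mem_Vs_iff (hT : ChainTransitiveOn f C) (hmaps : MapsTo f C C) (hsurj : SurjOn f C C)
    (hf : UniformContinuous f) (hz : z ∈ basin f C) (hx : x ∈ C) (hpC : ∀ i, p i ∈ C)
    (hzp : Tendsto (fun i => dist (f^[i] z) (p i)) atTop (𝓝 0)) :
    z ∈ Vs f C x ↔ ∀ δ > 0, ∀ᶠ i in atTop, relCdelta f C δ (f^[i] x) (p i) := by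
  refine ⟨fun hzx δ hδ => ?_, fun h => ⟨hz, fun δ hδ => ?_⟩⟩
  · exact eventually_relCdelta_of_frequently_infDist_lt hT hδ hmaps hsurj hf hx hpC hzp
      ((hzx.2 δ hδ).eventually (gt_mem_nhds (half_pos hδ))).frequently
  · exact tendsto_infDist_of_eventually_relCdelta hT hδ hmaps hsurj hx hpC hzp (h δ hδ)

lemma mem_Vs_iff_frequently (hT : ChainTransitiveOn f C) (hmaps : MapsTo f C C)
    (hsurj : SurjOn f C C) (hCc : IsCompact C) (hf : UniformContinuous f) (hz : z ∈ basin f C)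
    (hx : x ∈ C) :
    z ∈ Vs f C x ↔ ∀ n : ℕ, ∃ᶠ i in atTop,
      infDist (f^[i] z) (f^[i] '' classCdelta f C (1 / (n + 1)) x) < 1 / (n + 1) / 2 := by
  refine ⟨fun hzx n => ((hzx.2 _ Nat.one_div_pos_of_nat).eventually
    (gt_mem_nhds (half_pos Nat.one_div_pos_of_nat))).frequently, fun h => ?_⟩
  obtain ⟨p, hpC, hzp⟩ := exists_tendsto_dist_iterate_of_mem_basin hCc ⟨x, hx⟩ hz
  refine (mem_Vs_iff hT hmaps hsurj hf hz hx hpC hzp).2 fun δ hδ => ?_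
  obtain ⟨n, hn⟩ := exists_nat_one_div_lt hδ
  exact (eventually_relCdelta_of_frequently_infDist_lt hT Nat.one_div_pos_of_nat hmaps hsurj hf
    hx hpC hzp (h n)).mono fun i hi => hi.mono hn.le

/-- The points whose orbits track `p` at scale `1/(n+1)` from time `N n` on form a nested
sequence of nonempty compact sets. -/
lemma exists_eventually_relCdelta (hT : ChainTransitiveOn f C) (hmaps : MapsTo f C C)
    (hsurj : SurjOn f C C) (hCc : IsCompact C) (hf : Continuous f) (hpC : ∀ i, p i ∈ C)
    (hp : Tendsto (fun i => dist (f (p i)) (p (i + 1))) atTop (𝓝 0)) :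
    ∃ x ∈ C, ∀ δ > 0, ∀ᶠ i in atTop, relCdelta f C δ (f^[i] x) (p i) := by
  set ε : ℕ → ℝ := fun n => 1 / (n + 1)
  have hε : ∀ n, 0 < ε n := fun n => Nat.one_div_pos_of_nat
  obtain ⟨N, hNmono, hN⟩ := extraction_forall_of_eventually
    (P := fun n k => ∀ i ≥ k, dist (f (p i)) (p (i + 1)) ≤ ε n)
    fun n => eventually_forall_ge_atTop.2 (hp.eventually (ge_mem_nhds (hε n)))
  have htrack : ∀ n {u}, relCdelta f C (ε n) u (p (N n)) →
      ∀ k, relCdelta f C (ε n) (f^[k] u) (p (N n + k)) := fun n _ =>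
    relCdelta_iterate_of_dist_le hT (hε n) hmaps hpC (hN n)
  set K : ℕ → Set X := fun n => C ∩ f^[N n] ⁻¹' classCdelta f C (ε n) (p (N n))
  have hKclosed : ∀ n, IsClosed (K n) := fun n => hCc.isClosed.inter
    ((isClosed_classCdelta hT (hε n) hmaps hsurj hCc.isClosed).preimage (hf.iterate _))
  have hKne : ∀ n, (K n).Nonempty := fun n => by
    obtain ⟨w, hw, hwp⟩ := hsurj.iterate (N n) (hpC (N n))
    exact ⟨w, hw, by rw [mem_preimage, hwp]; exact mem_classCdelta_self hT (hε n) (hpC _)⟩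
  have hKanti : ∀ n, K (n + 1) ⊆ K n := by
    rintro n w ⟨hw, -, hpw⟩
    obtain ⟨k, hk⟩ := Nat.exists_eq_add_of_le (hNmono.monotone n.le_succ)
    have hw' : f^[N (n + 1)] w = f^[k] (f^[N n] w) := by
      rw [← Function.iterate_add_apply, hk, add_comm]
    have hpw' := hpw.mono (Nat.one_div_le_one_div n.le_succ)
    rw [hw', hk] at hpw'
    exact ⟨hw, hmaps.iterate _ hw, relCdelta.of_iterate hT (hε n) hmaps (hpC _)
      (hmaps.iterate _ hw) k ((htrack n (.refl hT (hε n) (hpC _)) k).trans hpw')⟩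
  obtain ⟨x, hx⟩ := IsCompact.nonempty_iInter_of_sequence_nonempty_isCompact_isClosed K hKanti
    hKne (hCc.of_isClosed_subset (hKclosed 0) inter_subset_left) hKclosed
  refine ⟨x, (mem_iInter.1 hx 0).1, fun δ hδ => ?_⟩
  obtain ⟨n, hn⟩ := exists_nat_one_div_lt hδ
  have hxn := (mem_iInter.1 hx n).2.2.symm hT (hε n)
  refine eventually_atTop.2 ⟨N n, fun i hi => ?_⟩
  have := (htrack n hxn (i - N n)).mono hn.le
  rwa [← Function.iterate_add_apply, Nat.sub_add_cancel hi, Nat.add_sub_cancel' hi] at this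

end Basin

lemma isGδ_setOf_forall_frequently {Y : Type*} [TopologicalSpace Y] {P : ℕ → ℕ → Y → Prop}
    (hP : ∀ n i, IsOpen {y | P n i y}) : IsGδ {y | ∀ n, ∃ᶠ i in atTop, P n i y} := by
  have : {y | ∀ n, ∃ᶠ i in atTop, P n i y} = ⋂ n, ⋂ N, ⋃ i ≥ N, {y | P n i y} := by
    ext; simp [frequently_atTop]
  rw [this]
  exact .iInter fun n => .iInter fun N => (isOpen_biUnion fun i _ => hP n i).isGδ

/-- The basin `W^s(C)` is the disjoint union of the sets `V^s(D)` over the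
classes `D` of `∼_C`, and each `V^s(D)` is a Gδ subset of `W^s(C)`. -/
theorem stmt10 {X : Type*} [MetricSpace X] [CompactSpace X]
    (f : X → X) (hf : Continuous f) (C : Set X) (hC : IsChainComponent f C) :
    (∀ x ∈ C, Vs f C x ⊆ basin f C) ∧
    (∀ z ∈ basin f C, ∃ x ∈ C, z ∈ Vs f C x) ∧
    (∀ x ∈ C, ∀ y ∈ C, ∀ z : X, z ∈ Vs f C x → z ∈ Vs f C y → relC f C x y) ∧
    (∀ x ∈ C, IsGδ {z : basin f C | (z : X) ∈ Vs f C x}) := by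
  have hT := hC.chainTransitiveOn hf
  have hmaps := hC.mapsTo hf
  have hCc : IsCompact C := (hC.isClosed hf).isCompact
  have hsurj := hT.surjOn hf hCc
  have hfu := CompactSpace.uniformContinuous_of_continuous hf
  refine ⟨fun _ _ _ hz => hz.1, fun z hz => ?_, fun x hx y hy z hzx hzy δ hδ => ?_, fun x hx => ?_⟩
  · obtain ⟨p, hpC, hzp⟩ := exists_tendsto_dist_iterate_of_mem_basin hCc hC.nonempty hz
    obtain ⟨x, hx, hxp⟩ :=
      exists_eventually_relCdelta hT hmaps hsurj hCc hf hpC (tendsto_dist_apply_succ hfu hzp)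
    exact ⟨x, hx, (mem_Vs_iff hT hmaps hsurj hfu hz hx hpC hzp).2 hxp⟩
  · obtain ⟨p, hpC, hzp⟩ := exists_tendsto_dist_iterate_of_mem_basin hCc hC.nonempty hzx.1
    obtain ⟨i, hxi, hyi⟩ := ((mem_Vs_iff hT hmaps hsurj hfu hzx.1 hx hpC hzp).1 hzx δ hδ |>.and
      ((mem_Vs_iff hT hmaps hsurj hfu hzx.1 hy hpC hzp).1 hzy δ hδ)).exists
    exact relCdelta.of_iterate hT hδ hmaps hx hy i (hxi.trans (hyi.symm hT hδ))
  · let P : ℕ → ℕ → basin f C → Prop := fun n i z =>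
      infDist (f^[i] z) (f^[i] '' classCdelta f C (1 / (n + 1)) x) < 1 / (n + 1) / 2
    have hP : ∀ n i, IsOpen {z | P n i z} := fun n i => isOpen_lt
      ((continuous_infDist_pt _).comp ((hf.iterate i).comp continuous_subtype_val)) continuous_const
    convert isGδ_setOf_forall_frequently hP using 1
    ext z
    rw [mem_ofPred_eq, mem_ofPred_eq, mem_Vs_iff_frequently hT hmaps hsurj hCc hfu z.2 hx]
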